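/- arXiv:2204.11098 — 2 statements merged into one kernel-verified Lean document; each statement's English description precedes it below -/
import Mathlib

section
/- Let I be a finite nonempty index set, let (w_i)_{i∈I} be positive real weights with ∑_{i∈I} w_i = 1, and let (μ_i)_{i∈I} be probability measures on a measurable space. Then the mixture μ_AA = ∑_{i∈I} w_i μ_i minimizes the weighted sum of Kullback–Leibler divergences from the fusing measures: for every probability measure g on the same space, ∑_{i∈I} w_i · D_KL(μ_i ‖ μ_AA) ≤ ∑_{i∈I} w_i · D_KL(μ_i ‖ g) (an inequality in the extended nonnegative reals). -/
/-!
Writing `μ_AA = ∑ w_i μ_i`, the chain rule for log-likelihood ratios gives the compensation identity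
`∑ w_i KL(μ_i ‖ g) = ∑ w_i KL(μ_i ‖ μ_AA) + KL(μ_AA ‖ g)`, and Gibbs' inequality
`KL(μ_AA ‖ g) ≥ 0` finishes. The identity needs no integrability assumption on the mixture side:
`w_i μ_i ≤ μ_AA` bounds `dμ_i/dμ_AA` by `1 / w_i`, and a log-likelihood ratio bounded from above
is always integrable.
-/

open MeasureTheory BigOperators ENNReal
open scoped Classical

/-- Kullback–Leibler divergence: `∫ log (dμ/dν) dμ` when `μ ≪ ν` and the log-likelihood
ratio is integrable, and `+∞` otherwise. -/
noncomputable def klDiv {α : Type*} [MeasurableSpace α] (μ ν : Measure α) : ℝ≥0∞ :=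
  if μ ≪ ν ∧ Integrable (llr μ ν) μ then ENNReal.ofReal (∫ x, llr μ ν x ∂μ) else ⊤

section LogLikelihoodRatio

variable {α : Type*} [MeasurableSpace α] {μ ν ρ : Measure α}

lemma integral_llr_nonneg [IsProbabilityMeasure μ] [IsProbabilityMeasure ν] (hμν : μ ≪ ν)
    (h_int : Integrable (llr μ ν) μ) : 0 ≤ ∫ x, llr μ ν x ∂μ := by
  simpa using InformationTheory.integral_llr_add_sub_measure_univ_nonneg hμν h_int

lemma llr_add_llr [SigmaFinite μ] [SigmaFinite ν] [SigmaFinite ρ] (hμν : μ ≪ ν) (hνρ : ν ≪ ρ) :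
    ∀ᵐ x ∂μ, llr μ ν x + llr ν ρ x = llr μ ρ x := by
  have hμρ := hμν.trans hνρ
  filter_upwards [hμρ.ae_le (Measure.rnDeriv_mul_rnDeriv hμν), Measure.rnDeriv_pos hμν,
    hμν.ae_le (Measure.rnDeriv_lt_top μ ν), hμν.ae_le (Measure.rnDeriv_pos hνρ),
    hμρ.ae_le (Measure.rnDeriv_lt_top ν ρ)] with x hmul hμν_pos hμν_lt hνρ_pos hνρ_lt
  rw [llr, llr, llr, ← hmul, Pi.mul_apply, ENNReal.toReal_mul,
    Real.log_mul (ENNReal.toReal_pos hμν_pos.ne' hμν_lt.ne).ne'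
      (ENNReal.toReal_pos hνρ_pos.ne' hνρ_lt.ne).ne']

/-- The lower bound `-dν/dμ ≤ llr μ ν` comes from `exp (-llr μ ν) = dν/dμ`. -/
lemma integrable_llr_of_ae_le [IsFiniteMeasure μ] [IsFiniteMeasure ν] (hμν : μ ≪ ν) {C : ℝ}
    (hC : ∀ᵐ x ∂μ, llr μ ν x ≤ C) : Integrable (llr μ ν) μ := by
  refine integrable_of_le_of_le (measurable_llr μ ν).aestronglyMeasurable ?_ hC
    (Measure.integrable_toReal_rnDeriv (μ := ν)).neg (integrable_const C)
  filter_upwards [exp_neg_llr hμν] with x hx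
  have := Real.add_one_le_exp (-llr μ ν x)
  simp only [Pi.neg_apply]
  linarith

lemma llr_le_neg_log_of_smul_le [IsFiniteMeasure μ] [SigmaFinite ν] {c : ℝ} (hc : 0 < c)
    (hle : ENNReal.ofReal c • μ ≤ ν) : ∀ᵐ x ∂μ, llr μ ν x ≤ -Real.log c := by
  have hc' : ENNReal.ofReal c ≠ 0 := by simpa using hc
  have hμν : μ ≪ ν :=
    (Measure.absolutelyContinuous_smul hc').trans (Measure.absolutelyContinuous_of_le hle)
  filter_upwards [hμν.ae_le (Measure.rnDeriv_smul_left_of_ne_top μ ν ofReal_ne_top),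
    hμν.ae_le (Measure.rnDeriv_le_one_of_le hle), Measure.rnDeriv_pos hμν] with x hsmul hle1 hpos
  rw [hsmul, Pi.smul_apply, smul_eq_mul, Pi.one_apply] at hle1
  have hlt : μ.rnDeriv ν x ≠ ⊤ := by
    rintro h
    simp [h, hc'] at hle1
  have hreal : c * (μ.rnDeriv ν x).toReal ≤ 1 := by
    simpa [ENNReal.toReal_mul, hc.le] using ENNReal.toReal_mono one_ne_top hle1
  rw [llr, ← Real.log_inv]
  refine Real.log_le_log (ENNReal.toReal_pos hpos.ne' hlt) ?_
  rwa [inv_eq_one_div, le_div_iff₀' hc]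

end LogLikelihoodRatio

section Mixture

variable {α ι : Type*} [MeasurableSpace α] [Fintype ι]

noncomputable def mixture (w : ι → ℝ) (μ : ι → Measure α) : Measure α :=
  ∑ j, ENNReal.ofReal (w j) • μ j

variable {w : ι → ℝ} {μ : ι → Measure α} {ν : Measure α}

lemma smul_le_mixture (w : ι → ℝ) (μ : ι → Measure α) (i : ι) :
    ENNReal.ofReal (w i) • μ i ≤ mixture w μ :=
  Finset.single_le_sum (f := fun j => ENNReal.ofReal (w j) • μ j) (fun _ _ => Measure.zero_le _)
    (Finset.mem_univ i)

instance [∀ i, IsFiniteMeasure (μ i)] : IsFiniteMeasure (mixture w μ) := by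
  constructor
  simp only [mixture, Measure.coe_finsetSum, Finset.sum_apply, Measure.smul_apply, smul_eq_mul]
  exact ENNReal.sum_lt_top.mpr fun i _ => mul_lt_top ofReal_lt_top (measure_lt_top _ _)

lemma isProbabilityMeasure_mixture [∀ i, IsProbabilityMeasure (μ i)] (hw : ∀ i, 0 ≤ w i)
    (hw_sum : ∑ i, w i = 1) : IsProbabilityMeasure (mixture w μ) := by
  constructor
  simp [mixture, ← ENNReal.ofReal_sum_of_nonneg fun i _ => hw i, hw_sum]

lemma absolutelyContinuous_mixture {i : ι} (hw : 0 < w i) : μ i ≪ mixture w μ :=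
  (Measure.absolutelyContinuous_smul (by simpa using hw)).trans
    (Measure.absolutelyContinuous_of_le (smul_le_mixture w μ i))

lemma mixture_absolutelyContinuous (hμν : ∀ i, μ i ≪ ν) : mixture w μ ≪ ν := by
  rw [mixture, ← Measure.sum_fintype]
  exact Measure.absolutelyContinuous_sum_left fun i => (hμν i).smul_left _

lemma integrable_mixture {f : α → ℝ} (hf : ∀ i, Integrable f (μ i)) :
    Integrable f (mixture w μ) :=
  integrable_finsetSum_measure.mpr fun i _ => (hf i).smul_measure ofReal_ne_top

lemma integral_mixture (hw : ∀ i, 0 ≤ w i) {f : α → ℝ} (hf : ∀ i, Integrable f (μ i)) :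
    ∫ x, f x ∂mixture w μ = ∑ i, w i * ∫ x, f x ∂μ i := by
  rw [mixture, integral_finsetSum_measure fun i _ => (hf i).smul_measure ofReal_ne_top]
  refine Finset.sum_congr rfl fun i _ => ?_
  rw [integral_smul_measure, ENNReal.toReal_ofReal (hw i), smul_eq_mul]

lemma integrable_llr_mixture_right [∀ i, IsFiniteMeasure (μ i)] {i : ι} (hw : 0 < w i) :
    Integrable (llr (μ i) (mixture w μ)) (μ i) :=
  integrable_llr_of_ae_le (absolutelyContinuous_mixture hw)
    (llr_le_neg_log_of_smul_le hw (smul_le_mixture w μ i))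

lemma integrable_llr_mixture_left [∀ i, IsFiniteMeasure (μ i)] [IsFiniteMeasure ν]
    (hw : ∀ i, 0 < w i) (hμν : ∀ i, μ i ≪ ν) (h_int : ∀ i, Integrable (llr (μ i) ν) (μ i))
    (i : ι) : Integrable (llr (mixture w μ) ν) (μ i) := by
  refine ((h_int i).sub (integrable_llr_mixture_right (hw i))).congr ?_
  filter_upwards [llr_add_llr (absolutelyContinuous_mixture (hw i))
    (mixture_absolutelyContinuous hμν)] with x hx
  simp only [Pi.sub_apply]
  linarith

theorem sum_mul_integral_llr_mixture_add_integral_llr [∀ i, IsFiniteMeasure (μ i)]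
    [IsFiniteMeasure ν] (hw : ∀ i, 0 < w i) (hμν : ∀ i, μ i ≪ ν)
    (h_int : ∀ i, Integrable (llr (μ i) ν) (μ i)) :
    ∑ i, w i * ∫ x, llr (μ i) (mixture w μ) x ∂μ i
        + ∫ x, llr (mixture w μ) ν x ∂mixture w μ
      = ∑ i, w i * ∫ x, llr (μ i) ν x ∂μ i := by
  have h_int_left := integrable_llr_mixture_left hw hμν h_int
  rw [integral_mixture (fun i => (hw i).le) h_int_left, ← Finset.sum_add_distrib]
  refine Finset.sum_congr rfl fun i _ => ?_
  rw [← mul_add, ← integral_add (integrable_llr_mixture_right (hw i)) (h_int_left i)]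
  congr 1
  exact integral_congr_ae
    (llr_add_llr (absolutelyContinuous_mixture (hw i)) (mixture_absolutelyContinuous hμν))

end Mixture

section WeightedKL

variable {α ι : Type*} [MeasurableSpace α] [Fintype ι]

lemma klDiv_of_ac_of_integrable {μ ν : Measure α} (hμν : μ ≪ ν)
    (h_int : Integrable (llr μ ν) μ) : klDiv μ ν = ENNReal.ofReal (∫ x, llr μ ν x ∂μ) :=
  if_pos ⟨hμν, h_int⟩

lemma sum_ofReal_mul_klDiv {w : ι → ℝ} {μ : ι → Measure α} {ν : Measure α}
    [∀ i, IsProbabilityMeasure (μ i)] [IsProbabilityMeasure ν] (hw : ∀ i, 0 ≤ w i)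
    (h : ∀ i, μ i ≪ ν ∧ Integrable (llr (μ i) ν) (μ i)) :
    ∑ i, ENNReal.ofReal (w i) * klDiv (μ i) ν
      = ENNReal.ofReal (∑ i, w i * ∫ x, llr (μ i) ν x ∂μ i) := by
  rw [ENNReal.ofReal_sum_of_nonneg fun i _ =>
    mul_nonneg (hw i) (integral_llr_nonneg (h i).1 (h i).2)]
  refine Finset.sum_congr rfl fun i _ => ?_
  rw [klDiv_of_ac_of_integrable (h i).1 (h i).2, ← ENNReal.ofReal_mul (hw i)]

end WeightedKL

theorem aa_fusion_minimizes_weighted_kl_general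
    {α : Type*} [MeasurableSpace α]
    {ι : Type*} [Fintype ι]
    (w : ι → ℝ) (hw_pos : ∀ i, 0 < w i) (hw_sum : ∑ i, w i = 1)
    (μ : ι → Measure α) (hμ : ∀ i, IsProbabilityMeasure (μ i)) :
    ∀ g : Measure α, IsProbabilityMeasure g →
      ∑ i, ENNReal.ofReal (w i) * klDiv (μ i) (∑ j, ENNReal.ofReal (w j) • μ j)
        ≤ ∑ i, ENNReal.ofReal (w i) * klDiv (μ i) g := by
  intro g hg
  have hw := fun i => (hw_pos i).le
  have := isProbabilityMeasure_mixture (μ := μ) hw hw_sum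
  change ∑ i, _ * klDiv (μ i) (mixture w μ) ≤ _
  by_cases hμg : ∀ i, μ i ≪ g ∧ Integrable (llr (μ i) g) (μ i)
  swap
  · obtain ⟨i, hi⟩ := not_forall.mp hμg
    refine le_top.trans_eq (ENNReal.sum_eq_top.mpr ⟨i, Finset.mem_univ i, ?_⟩).symm
    rw [klDiv, if_neg hi, mul_top (by simpa using hw_pos i)]
  choose hμg_ac hμg_int using hμg
  have hμF : ∀ i, μ i ≪ mixture w μ ∧ Integrable (llr (μ i) (mixture w μ)) (μ i) := fun i =>
    ⟨absolutelyContinuous_mixture (hw_pos i), integrable_llr_mixture_right (hw_pos i)⟩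
  have hgibbs : 0 ≤ ∫ x, llr (mixture w μ) g x ∂mixture w μ :=
    integral_llr_nonneg (mixture_absolutelyContinuous hμg_ac)
      (integrable_mixture (integrable_llr_mixture_left hw_pos hμg_ac hμg_int))
  rw [sum_ofReal_mul_klDiv hw hμF, sum_ofReal_mul_klDiv hw fun i => ⟨hμg_ac i, hμg_int i⟩,
    ← sum_mul_integral_llr_mixture_add_integral_llr hw_pos hμg_ac hμg_int]
  exact ENNReal.ofReal_le_ofReal (le_add_of_nonneg_right hgibbs)

/-- the arithmetic-average (AA) mixture minimizes the weighted sum of KL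
divergences from the fusing measures over all probability measures `g`. -/
theorem aa_fusion_minimizes_weighted_kl
    {α : Type*} [MeasurableSpace α]
    {ι : Type*} [Fintype ι] [Nonempty ι]
    (w : ι → ℝ) (hw_pos : ∀ i, 0 < w i) (hw_sum : ∑ i, w i = 1)
    (μ : ι → Measure α) (hμ : ∀ i, IsProbabilityMeasure (μ i)) :
    ∀ g : Measure α, IsProbabilityMeasure g →
      ∑ i, ENNReal.ofReal (w i) * klDiv (μ i) (∑ j, ENNReal.ofReal (w j) • μ j)
        ≤ ∑ i, ENNReal.ofReal (w i) * klDiv (μ i) g :=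
  aa_fusion_minimizes_weighted_kl_general w hw_pos hw_sum μ hμ
end

section
/- Let I be a finite nonempty index set, let (w_i)_{i∈I} be positive real weights with ∑_{i∈I} w_i = 1, let (μ_i)_{i∈I} be probability measures on a measurable space, and let g be a probability measure with D_KL(μ_i ‖ g) finite for every i ∈ I. Let μ_AA = ∑_{i∈I} w_i μ_i. Then D_KL(μ_AA ‖ g) = ∑_{i∈I} w_i · D_KL(μ_i ‖ g) holds if and only if μ_i = μ_AA for every i ∈ I (equivalently, all μ_i are identical). -/
open MeasureTheory BigOperators ENNReal
open scoped Classical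

/-! The chain rule `log dμᵢ/dg = log dμᵢ/dν + log dν/dg`, integrated against `μᵢ` and averaged
with the weights, gives the compensation identity
`∑ wᵢ KL(μᵢ ‖ g) = KL(ν ‖ g) + ∑ wᵢ KL(μᵢ ‖ ν)` for the mixture `ν = ∑ wᵢ μᵢ`.
So equality holds iff every `KL(μᵢ ‖ ν)` vanishes, that is, iff `μᵢ = ν` by Gibbs' inequality. -/

open InformationTheory (klDiv_ne_top klDiv_ne_top_iff toReal_klDiv_of_measure_eq
  klDiv_eq_zero_iff)

/-- Mathlib's `InformationTheory.klDiv` adds the mass correction `ν univ - μ univ`. -/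
lemma klDiv_eq_informationTheory_klDiv {α : Type*} [MeasurableSpace α] {μ ν : Measure α}
    (h : μ Set.univ = ν Set.univ) : klDiv μ ν = InformationTheory.klDiv μ ν := by
  by_cases hc : μ ≪ ν ∧ Integrable (llr μ ν) μ
  · rw [klDiv, if_pos hc, InformationTheory.klDiv_of_ac_of_integrable hc.1 hc.2, measureReal_def,
      measureReal_def, h, add_sub_cancel_right]
  · rw [klDiv, if_neg hc, eq_comm, ← not_ne_iff, klDiv_ne_top_iff]
    exact hc

section ChainRule

variable {α : Type*} [MeasurableSpace α] {μ ν ρ : Measure α}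
  [SigmaFinite μ] [SigmaFinite ν] [SigmaFinite ρ]

lemma llr_ae_eq_llr_add_llr (hμν : μ ≪ ν) (hνρ : ν ≪ ρ) :
    llr μ ρ =ᵐ[μ] llr μ ν + llr ν ρ := by
  filter_upwards [(hμν.trans hνρ).ae_le (Measure.rnDeriv_mul_rnDeriv hμν),
    Measure.rnDeriv_pos hμν, hμν.ae_le (Measure.rnDeriv_lt_top μ ν),
    hμν.ae_le (Measure.rnDeriv_pos hνρ), (hμν.trans hνρ).ae_le (Measure.rnDeriv_lt_top ν ρ)]
    with x hx hμν_pos hμν_lt hνρ_pos hνρ_lt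
  have hμν_ne : (μ.rnDeriv ν x).toReal ≠ 0 := ENNReal.toReal_ne_zero.mpr ⟨hμν_pos.ne', hμν_lt.ne⟩
  have hνρ_ne : (ν.rnDeriv ρ x).toReal ≠ 0 := ENNReal.toReal_ne_zero.mpr ⟨hνρ_pos.ne', hνρ_lt.ne⟩
  simp only [llr_def, Pi.add_apply, Pi.mul_apply] at hx ⊢
  rw [← hx, ENNReal.toReal_mul, Real.log_mul hμν_ne hνρ_ne]

lemma integrable_llr_of_integrable_llr_trans (hμν : μ ≪ ν) (hνρ : ν ≪ ρ)
    (hμρ_int : Integrable (llr μ ρ) μ) (hνρ_int : Integrable (llr ν ρ) μ) :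
    Integrable (llr μ ν) μ :=
  (hμρ_int.sub hνρ_int).congr <| by
    filter_upwards [llr_ae_eq_llr_add_llr hμν hνρ] with x hx
    simp [hx]

lemma integral_llr_eq_integral_llr_add (hμν : μ ≪ ν) (hνρ : ν ≪ ρ)
    (hμρ_int : Integrable (llr μ ρ) μ) (hνρ_int : Integrable (llr ν ρ) μ) :
    ∫ x, llr μ ρ x ∂μ = ∫ x, llr μ ν x ∂μ + ∫ x, llr ν ρ x ∂μ := by
  rw [← integral_add (integrable_llr_of_integrable_llr_trans hμν hνρ hμρ_int hνρ_int) hνρ_int]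
  exact integral_congr_ae (llr_ae_eq_llr_add_llr hμν hνρ)

end ChainRule

section Mixture

variable {α ι : Type*} [MeasurableSpace α] [Fintype ι] {μ : ι → Measure α} {c : ι → ℝ≥0∞}

lemma absolutelyContinuous_sum_smul (i : ι) (hc : c i ≠ 0) : μ i ≪ ∑ j, c j • μ j :=
  (Measure.absolutelyContinuous_smul hc).trans <| Measure.absolutelyContinuous_of_le <|
    Finset.single_le_sum (f := fun j ↦ c j • μ j) (fun _ _ ↦ Measure.zero_le _) (Finset.mem_univ i)

lemma integrable_sum_smul_iff {f : α → ℝ} (hc0 : ∀ j, c j ≠ 0) (hc : ∀ j, c j ≠ ∞) :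
    Integrable f (∑ j, c j • μ j) ↔ ∀ j, Integrable f (μ j) := by
  simp [integrable_finsetSum_measure, integrable_smul_measure (hc0 _) (hc _)]

lemma integral_sum_smul_measure {f : α → ℝ} (hc : ∀ j, c j ≠ ∞) (hf : ∀ j, Integrable f (μ j)) :
    ∫ x, f x ∂(∑ j, c j • μ j) = ∑ j, (c j).toReal * ∫ x, f x ∂μ j := by
  rw [integral_finsetSum_measure fun j _ ↦ (hf j).smul_measure (hc j)]
  simp [integral_smul_measure]

lemma isProbabilityMeasure_sum_smul [∀ j, IsProbabilityMeasure (μ j)] (hc : ∑ j, c j = 1) :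
    IsProbabilityMeasure (∑ j, c j • μ j) :=
  ⟨by simp [Measure.finsetSum_apply, hc]⟩

theorem sum_mul_klDiv_eq_klDiv_add_sum_mul_klDiv {g : Measure α} [IsProbabilityMeasure g]
    [∀ j, IsProbabilityMeasure (μ j)] (hc0 : ∀ j, c j ≠ 0) (hc : ∀ j, c j ≠ ∞)
    (hc1 : ∑ j, c j = 1) (hμg : ∀ j, InformationTheory.klDiv (μ j) g ≠ ∞)
    (hνg : InformationTheory.klDiv (∑ j, c j • μ j) g ≠ ∞) :
    ∑ j, c j * InformationTheory.klDiv (μ j) g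
      = InformationTheory.klDiv (∑ j, c j • μ j) g
        + ∑ j, c j * InformationTheory.klDiv (μ j) (∑ j, c j • μ j) := by
  set ν := ∑ j, c j • μ j
  have := isProbabilityMeasure_sum_smul (μ := μ) hc1
  have hμg' := fun j ↦ klDiv_ne_top_iff.mp (hμg j)
  obtain ⟨hνg_ac, hνg_int⟩ := klDiv_ne_top_iff.mp hνg
  have hνg_int' := (integrable_sum_smul_iff hc0 hc).mp hνg_int
  have hμν_ac := fun j ↦ absolutelyContinuous_sum_smul (μ := μ) j (hc0 j)
  have hμν : ∀ j, InformationTheory.klDiv (μ j) ν ≠ ∞ := fun j ↦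
    klDiv_ne_top (hμν_ac j)
      (integrable_llr_of_integrable_llr_trans (hμν_ac j) hνg_ac (hμg' j).2 (hνg_int' j))
  have hreal : ∀ j, (InformationTheory.klDiv (μ j) g).toReal
      = (InformationTheory.klDiv (μ j) ν).toReal + ∫ x, llr ν g x ∂μ j := fun j ↦ by
    rw [toReal_klDiv_of_measure_eq (hμg' j).1 (by simp),
      toReal_klDiv_of_measure_eq (hμν_ac j) (by simp)]
    exact integral_llr_eq_integral_llr_add (hμν_ac j) hνg_ac (hμg' j).2 (hνg_int' j)
  have hνreal : (InformationTheory.klDiv ν g).toReal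
      = ∑ j, (c j).toReal * ∫ x, llr ν g x ∂μ j := by
    rw [toReal_klDiv_of_measure_eq hνg_ac (by simp)]
    exact integral_sum_smul_measure hc hνg_int'
  have hsum_g : ∑ j, c j * InformationTheory.klDiv (μ j) g ≠ ∞ :=
    ENNReal.sum_ne_top.mpr fun j _ ↦ ENNReal.mul_ne_top (hc j) (hμg j)
  have hsum_ν : ∑ j, c j * InformationTheory.klDiv (μ j) ν ≠ ∞ :=
    ENNReal.sum_ne_top.mpr fun j _ ↦ ENNReal.mul_ne_top (hc j) (hμν j)
  rw [← ENNReal.toReal_eq_toReal_iff' hsum_g (ENNReal.add_ne_top.mpr ⟨hνg, hsum_ν⟩),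
    ENNReal.toReal_add hνg hsum_ν, ENNReal.toReal_sum fun j _ ↦ ENNReal.mul_ne_top (hc j) (hμg j),
    ENNReal.toReal_sum fun j _ ↦ ENNReal.mul_ne_top (hc j) (hμν j)]
  simp only [ENNReal.toReal_mul, hreal, hνreal, mul_add, Finset.sum_add_distrib, add_comm]

end Mixture

theorem aa_fusion_kl_equality_iff_general
    {α : Type*} [MeasurableSpace α]
    {ι : Type*} [Fintype ι]
    (w : ι → ℝ) (hw_pos : ∀ i, 0 < w i) (hw_sum : ∑ i, w i = 1)
    (μ : ι → Measure α) (hμ : ∀ i, IsProbabilityMeasure (μ i))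
    (g : Measure α) (hg : IsProbabilityMeasure g)
    (hfin : ∀ i, klDiv (μ i) g ≠ ⊤) :
    klDiv (∑ j, ENNReal.ofReal (w j) • μ j) g
        = ∑ i, ENNReal.ofReal (w i) * klDiv (μ i) g
      ↔ ∀ i, μ i = ∑ j, ENNReal.ofReal (w j) • μ j := by
  have hc0 : ∀ i, ENNReal.ofReal (w i) ≠ 0 := fun i ↦ (ENNReal.ofReal_pos.mpr (hw_pos i)).ne'
  have hc1 : ∑ i, ENNReal.ofReal (w i) = 1 := by
    rw [← ENNReal.ofReal_sum_of_nonneg fun i _ ↦ (hw_pos i).le, hw_sum, ENNReal.ofReal_one]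
  set ν := ∑ j, ENNReal.ofReal (w j) • μ j
  have := isProbabilityMeasure_sum_smul (μ := μ) hc1
  simp only [klDiv_eq_informationTheory_klDiv, measure_univ] at hfin ⊢
  constructor
  · intro heq i
    have hνg : InformationTheory.klDiv ν g ≠ ∞ := heq ▸
      ENNReal.sum_ne_top.mpr fun i _ ↦ ENNReal.mul_ne_top ENNReal.ofReal_ne_top (hfin i)
    rw [sum_mul_klDiv_eq_klDiv_add_sum_mul_klDiv hc0 (fun _ ↦ ENNReal.ofReal_ne_top) hc1 hfin hνg]
      at heq
    have hsum_zero : ∑ j, ENNReal.ofReal (w j) * InformationTheory.klDiv (μ j) ν = 0 :=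
      (ENNReal.add_right_inj hνg).mp (heq.symm.trans (add_zero _).symm)
    exact klDiv_eq_zero_iff.mp <| (mul_eq_zero.mp <|
      Finset.sum_eq_zero_iff.mp hsum_zero i (Finset.mem_univ i)).resolve_left (hc0 i)
  · intro h
    calc InformationTheory.klDiv ν g
        = ∑ i, ENNReal.ofReal (w i) * InformationTheory.klDiv ν g := by
          rw [← Finset.sum_mul, hc1, one_mul]
      _ = ∑ i, ENNReal.ofReal (w i) * InformationTheory.klDiv (μ i) g :=
          Finset.sum_congr rfl fun i _ ↦ by rw [h i]

/-- equality in the mixture KL convexity inequality holds if and only if all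
fusing measures coincide with the mixture. -/
theorem aa_fusion_kl_equality_iff
    {α : Type*} [MeasurableSpace α]
    {ι : Type*} [Fintype ι] [Nonempty ι]
    (w : ι → ℝ) (hw_pos : ∀ i, 0 < w i) (hw_sum : ∑ i, w i = 1)
    (μ : ι → Measure α) (hμ : ∀ i, IsProbabilityMeasure (μ i))
    (g : Measure α) (hg : IsProbabilityMeasure g)
    (hfin : ∀ i, klDiv (μ i) g ≠ ⊤) :
    klDiv (∑ j, ENNReal.ofReal (w j) • μ j) g
        = ∑ i, ENNReal.ofReal (w i) * klDiv (μ i) g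
      ↔ ∀ i, μ i = ∑ j, ENNReal.ofReal (w j) • μ j :=
  aa_fusion_kl_equality_iff_general w hw_pos hw_sum μ hμ g hg hfin
end
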